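/- In the coordinate quasi-Codazzi setup on U, assume that p x is nondegenerate and Φ⁺ x is invertible for every x ∈ U. If T⁺(X,Y) = 0 for all smooth vector fields X, Y, and C(X,Y,Z) = C(Y,X,Z) for all smooth vector fields X, Y, Z, then T⁻(X,Y) = 0 for all smooth vector fields X, Y. (Paper's Proposition 3.20, part (2): if Φ⁺ is an isomorphism, relative torsion-freeness of ∇⁺ together with total symmetry of C forces relative torsion-freeness of ∇⁻.) -/
import Mathlib


noncomputable section

open Set

/-- ℝⁿ. -/
abbrev Vn (n : ℕ) : Type := Fin n → ℝ

/-- Pairings (fiber metrics pairing `E⁺` with `E⁻`) on the trivialized bundle. -/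
abbrev Pairn (n : ℕ) : Type := Vn n →L[ℝ] Vn n →L[ℝ] ℝ

/-- Connection forms on the trivialized bundle. -/
abbrev Connn (n : ℕ) : Type := Vn n →L[ℝ] Vn n →L[ℝ] Vn n

/-- Bundle maps `TU → E±` in the trivialization. -/
abbrev Bdln (n : ℕ) : Type := Vn n →L[ℝ] Vn n

/-- Covariant derivative of the section `ν` along the vector field `X`,
for the connection with connection form `A`. -/
def cov {n : ℕ} (A : Vn n → Connn n) (X ν : Vn n → Vn n) (x : Vn n) : Vn n :=
  fderiv ℝ ν x (X x) + A x (X x) (ν x)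

/-- Lie bracket of vector fields on an open set of ℝⁿ. -/
def lieB {n : ℕ} (X Y : Vn n → Vn n) (x : Vn n) : Vn n :=
  fderiv ℝ Y x (X x) - fderiv ℝ X x (Y x)

/-- The section `Φ±Y : x ↦ Φ± x (Y x)`. -/
def secPhi {n : ℕ} (Φ : Vn n → Bdln n) (Y : Vn n → Vn n) : Vn n → Vn n :=
  fun x => Φ x (Y x)

/-- The induced (possibly degenerate) metric `h x y z = 2 p x (Φ⁺ x y) (Φ⁻ x z)`. -/
def hmet {n : ℕ} (p : Vn n → Pairn n) (Φp Φm : Vn n → Bdln n) (x y z : Vn n) : ℝ :=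
  2 * p x (Φp x y) (Φm x z)

/-- The generalized Amari–Chentsov cubic tensor. -/
def Ctensor {n : ℕ} (p : Vn n → Pairn n) (Ap Am : Vn n → Connn n)
    (Φp Φm : Vn n → Bdln n) (X Y Z : Vn n → Vn n) (x : Vn n) : ℝ :=
  -2 * (p x (cov Ap X (secPhi Φp Y) x) (Φm x (Z x))
        - p x (Φp x (Z x)) (cov Am X (secPhi Φm Y) x))

/-- The relative torsion `T(X,Y) = ∇_X(ΦY) − ∇_Y(ΦX) − Φ[X,Y]`. -/
def Ttor {n : ℕ} (A : Vn n → Connn n) (Φ : Vn n → Bdln n)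
    (X Y : Vn n → Vn n) (x : Vn n) : Vn n :=
  cov A X (secPhi Φ Y) x - cov A Y (secPhi Φ X) x - Φ x (lieB X Y x)

/-- The Kossowski pseudo-connection. -/
def Koss {n : ℕ} (p : Vn n → Pairn n) (Φp Φm : Vn n → Bdln n)
    (X Y Z : Vn n → Vn n) (x : Vn n) : ℝ :=
  fderiv ℝ (fun y => p y (Φp y (Y y)) (Φm y (Z y))) x (X x)
  + fderiv ℝ (fun y => p y (Φp y (Z y)) (Φm y (X y))) x (Y x)
  - fderiv ℝ (fun y => p y (Φp y (X y)) (Φm y (Y y))) x (Z x)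
  - p x (Φp x (X x)) (Φm x (lieB Y Z x))
  + p x (Φp x (Y x)) (Φm x (lieB Z X x))
  + p x (Φp x (Z x)) (Φm x (lieB X Y x))

/-- The curvature of a connection form `A` at `x` in directions `v`, `w`. -/
def curvA {n : ℕ} (A : Vn n → Connn n) (x v w : Vn n) : Vn n →L[ℝ] Vn n :=
  fderiv ℝ A x v w - fderiv ℝ A x w v + (A x v).comp (A x w) - (A x w).comp (A x v)

/-- Paper's Proposition 3.20, part (2): in the coordinate quasi-Codazzi setup,
if `p` is nondegenerate, `Φ⁺` is a pointwise isomorphism, the relative torsion of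
`∇⁺` vanishes and `C(X,Y,Z) = C(Y,X,Z)`, then the relative torsion of `∇⁻`
vanishes as well. -/
theorem statement15 {n : ℕ} (U : Set (Vn n)) (hUopen : IsOpen U)
    (p : Vn n → Pairn n) (hpsmooth : ContDiffOn ℝ (⊤ : ℕ∞) p U)
    (hpnondeg : ∀ x ∈ U, ∀ a : Vn n, (∀ b : Vn n, p x a b = 0) → a = 0)
    (hpnondeg' : ∀ x ∈ U, ∀ b : Vn n, (∀ a : Vn n, p x a b = 0) → b = 0)
    (Ap Am : Vn n → Connn n)
    (hApsmooth : ContDiffOn ℝ (⊤ : ℕ∞) Ap U) (hAmsmooth : ContDiffOn ℝ (⊤ : ℕ∞) Am U)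
    (hdual : ∀ x ∈ U, ∀ v a b : Vn n,
      fderiv ℝ p x v a b = p x (Ap x v a) b + p x a (Am x v b))
    (Φp Φm : Vn n → Bdln n)
    (hΦpsmooth : ContDiffOn ℝ (⊤ : ℕ∞) Φp U) (hΦmsmooth : ContDiffOn ℝ (⊤ : ℕ∞) Φm U)
    (hLag : ∀ x ∈ U, ∀ y z : Vn n, p x (Φp x y) (Φm x z) = p x (Φp x z) (Φm x y))
    -- Φ⁺ x is invertible for every x ∈ U
    (hΦpbij : ∀ x ∈ U, Function.Bijective (Φp x))
    -- the relative torsion of ∇⁺ vanishes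
    (hTp : ∀ X Y : Vn n → Vn n,
      ContDiffOn ℝ (⊤ : ℕ∞) X U → ContDiffOn ℝ (⊤ : ℕ∞) Y U →
      ∀ x ∈ U, Ttor Ap Φp X Y x = 0)
    -- C is symmetric in its first two arguments
    (hCsym : ∀ X Y Z : Vn n → Vn n,
      ContDiffOn ℝ (⊤ : ℕ∞) X U → ContDiffOn ℝ (⊤ : ℕ∞) Y U → ContDiffOn ℝ (⊤ : ℕ∞) Z U →
      ∀ x ∈ U,
        Ctensor p Ap Am Φp Φm X Y Z x = Ctensor p Ap Am Φp Φm Y X Z x) :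
    ∀ X Y : Vn n → Vn n,
      ContDiffOn ℝ (⊤ : ℕ∞) X U → ContDiffOn ℝ (⊤ : ℕ∞) Y U →
      ∀ x ∈ U, Ttor Am Φm X Y x = 0 := by
  intro X Y hX hY x hx
  apply hpnondeg' x hx
  intro a
  obtain ⟨z, hz⟩ := (hΦpbij x hx).2 a
  have hC := hCsym X Y (fun _ => z) hX hY contDiffOn_const x hx
  have hT := hTp X Y hX hY x hx
  unfold Ttor at hT ⊢
  unfold Ctensor at hC
  have hT' : cov Ap X (secPhi Φp Y) x - cov Ap Y (secPhi Φp X) x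
      = Φp x (lieB X Y x) := sub_eq_zero.mp hT
  have hLag1 := hLag x hx (lieB X Y x) z
  have h1 : p x (cov Ap X (secPhi Φp Y) x) (Φm x z)
      - p x (cov Ap Y (secPhi Φp X) x) (Φm x z)
      = p x (Φp x (lieB X Y x)) (Φm x z) := by
    rw [← hT', map_sub, ContinuousLinearMap.sub_apply]
  rw [← hz]
  simp only [map_sub]
  simp only at hC
  linarith [h1, hLag1, hC]
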